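/- arXiv:1412.0165 — 2 statements merged into one kernel-verified Lean document; each statement's English description precedes it below -/
import Mathlib

section
/- (Exact recovery of the LUD solver in the noiseless case.) Let G = (V, E) be a finite simple graph and t : V → ℝ^d a configuration with t_i ≠ t_j for every edge (i,j) ∈ E, normalized so that ∑_{i∈V} t_i = 0 and min_{(i,j)∈E} ‖t_i − t_j‖ = 1, and suppose t is parallel rigid on G. Let γ_{ij} = (t_i − t_j)/‖t_i − t_j‖ for (i,j) ∈ E be the noiseless direction measurements. Then every feasible point (t', d') of the LUD problem (i.e., ∑_{i∈V} t'_i = 0 and d'_{ij} ≥ 1 for all (i,j) ∈ E) achieving zero cost, ∑_{(i,j)∈E} ‖t'_i − t'_j − d'_{ij} γ_{ij}‖ = 0, satisfies t' = α·t for some scalar α ≥ 1. In particular, any optimal solution of the LUD problem is congruent to t. -/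
/-- `t'` is parallel to `t` on the graph `G`. -/
def IsParallel {V : Type*} {d : ℕ} (G : SimpleGraph V)
    (t t' : V → EuclideanSpace ℝ (Fin d)) : Prop :=
  ∀ i j, G.Adj i j → ∃ c : ℝ, t' i - t' j = c • (t i - t j)

/-- `t'` is congruent to `t`: a global scaling plus translation of `t`. -/
def IsCongruent {V : Type*} {d : ℕ} (t t' : V → EuclideanSpace ℝ (Fin d)) : Prop :=
  ∃ (c : ℝ) (b : EuclideanSpace ℝ (Fin d)), ∀ i, t' i = c • t i + b

/-- `t` is parallel rigid on `G`. -/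
def IsParallelRigid {V : Type*} {d : ℕ} (G : SimpleGraph V)
    (t : V → EuclideanSpace ℝ (Fin d)) : Prop :=
  ∀ t' : V → EuclideanSpace ℝ (Fin d), IsParallel G t t' → IsCongruent t t'

/-- Exact recovery of the LUD solver in the noiseless case: if `t` is parallel rigid on `G`,
normalized with `∑ tᵢ = 0` and `min ‖tᵢ - tⱼ‖ = 1` over the edges, and the direction
measurements are the noiseless `γᵢⱼ = (tᵢ - tⱼ)/‖tᵢ - tⱼ‖`, then any feasible point
`(t', d')` of the LUD problem achieving zero cost satisfies `t' = α • t` for some `α ≥ 1`;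
in particular it is congruent to `t`. -/
theorem lud_exact_recovery {V : Type*} [Fintype V] {d : ℕ}
    (G : SimpleGraph V) [DecidableRel G.Adj]
    (t : V → EuclideanSpace ℝ (Fin d))
    (ht : ∀ i j, G.Adj i j → t i ≠ t j)
    (hsum : ∑ i, t i = 0)
    (hge : ∀ i j, G.Adj i j → 1 ≤ ‖t i - t j‖)
    (hmin : ∃ i j, G.Adj i j ∧ ‖t i - t j‖ = 1)
    (hrigid : IsParallelRigid G t)
    (t' : V → EuclideanSpace ℝ (Fin d)) (d' : V → V → ℝ)
    (hfeas₁ : ∑ i, t' i = 0)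
    (hfeas₂ : ∀ i j, G.Adj i j → 1 ≤ d' i j)
    (hcost : (∑ i, ∑ j, if G.Adj i j then
        ‖t' i - t' j - d' i j • (‖t i - t j‖⁻¹ • (t i - t j))‖ else 0) = 0) :
    (∃ α : ℝ, 1 ≤ α ∧ ∀ i, t' i = α • t i) ∧ IsCongruent t t' := by
  -- each term of the cost is zero
  have hterm : ∀ i j, G.Adj i j →
      t' i - t' j = d' i j • (‖t i - t j‖⁻¹ • (t i - t j)) := by
    intro i j hij
    have h1 : ∀ i ∈ Finset.univ, (0:ℝ) ≤ ∑ j, (if G.Adj i j then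
        ‖t' i - t' j - d' i j • (‖t i - t j‖⁻¹ • (t i - t j))‖ else 0) := by
      intro i _
      apply Finset.sum_nonneg
      intro j _
      split <;> positivity
    have h2 := (Finset.sum_eq_zero_iff_of_nonneg h1).mp hcost i (Finset.mem_univ i)
    have h3 : ∀ j ∈ Finset.univ, (0:ℝ) ≤ (if G.Adj i j then
        ‖t' i - t' j - d' i j • (‖t i - t j‖⁻¹ • (t i - t j))‖ else 0) := by
      intro j _; split <;> positivity
    have h4 := (Finset.sum_eq_zero_iff_of_nonneg h3).mp h2 j (Finset.mem_univ j)
    rw [if_pos hij, norm_eq_zero, sub_eq_zero] at h4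
    exact h4
  have hpar : IsParallel G t t' := by
    intro i j hij
    exact ⟨d' i j * ‖t i - t j‖⁻¹, by rw [hterm i j hij, mul_smul]⟩
  obtain ⟨c, b, hc⟩ := hrigid t' hpar
  obtain ⟨i₀, j₀, hadj, hnorm⟩ := hmin
  haveI : Nonempty V := ⟨i₀⟩
  have hb : b = 0 := by
    have : ∑ i, t' i = (Fintype.card V : ℝ) • b := by
      simp [hc, Finset.sum_add_distrib, ← Finset.smul_sum, hsum, Finset.card_univ]
      exact (Nat.cast_smul_eq_nsmul ℝ _ b).symm
    rw [hfeas₁] at this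
    have hcard : (Fintype.card V : ℝ) ≠ 0 := by
      exact_mod_cast Fintype.card_ne_zero
    exact (smul_eq_zero.mp this.symm).resolve_left hcard
  have hc' : ∀ i, t' i = c • t i := by
    intro i; rw [hc i, hb, add_zero]
  -- c = d' i₀ j₀ ≥ 1
  have he : t' i₀ - t' j₀ = d' i₀ j₀ • (t i₀ - t j₀) := by
    rw [hterm i₀ j₀ hadj, hnorm]; simp
  have he2 : t' i₀ - t' j₀ = c • (t i₀ - t j₀) := by
    rw [hc' i₀, hc' j₀, ← smul_sub]
  have hcd : c = d' i₀ j₀ := by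
    have h5 : (c - d' i₀ j₀) • (t i₀ - t j₀) = 0 := by
      rw [sub_smul, ← he2, ← he, sub_self]
    have h6 : t i₀ - t j₀ ≠ 0 := sub_ne_zero.mpr (ht i₀ j₀ hadj)
    have := (smul_eq_zero.mp h5).resolve_right h6
    linarith [sub_eq_zero.mp (by linarith [this] : c - d' i₀ j₀ = 0)]
  have hc1 : 1 ≤ c := hcd ▸ hfeas₂ i₀ j₀ hadj
  exact ⟨⟨c, hc1, hc'⟩, c, b, hc⟩
end

section
/- (Exact recovery of the CLS solver in the noiseless case.) Let G = (V, E) be a finite simple graph and t : V → ℝ^d a configuration with t_i ≠ t_j for every edge (i,j) ∈ E, normalized so that ∑_{i∈V} t_i = 0 and min_{(i,j)∈E} ‖t_i − t_j‖ = 1, and suppose t is parallel rigid on G. Let γ_{ij} = (t_i − t_j)/‖t_i − t_j‖ for (i,j) ∈ E. Then every feasible point (t', d') of the CLS problem (i.e., ∑_{i∈V} t'_i = 0 and d'_{ij} ≥ 1 for all (i,j) ∈ E) achieving zero cost, ∑_{(i,j)∈E} ‖t'_i − t'_j − d'_{ij} γ_{ij}‖² = 0, satisfies t' = α·t for some scalar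 α ≥ 1. In particular, any optimal solution of the CLS problem is congruent to t. -/
/-- Exact recovery of the CLS solver in the noiseless case: if `t` is parallel rigid on `G`,
normalized with `∑ tᵢ = 0` and `min ‖tᵢ - tⱼ‖ = 1` over the edges, and the direction
measurements are the noiseless `γᵢⱼ = (tᵢ - tⱼ)/‖tᵢ - tⱼ‖`, then any feasible point
`(t', d')` of the CLS problem achieving zero cost satisfies `t' = α • t` for some `α ≥ 1`;
in particular it is congruent to `t`. -/
theorem cls_exact_recovery {V : Type*} [Fintype V] {d : ℕ}
    (G : SimpleGraph V) [DecidableRel G.Adj]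
    (t : V → EuclideanSpace ℝ (Fin d))
    (ht : ∀ i j, G.Adj i j → t i ≠ t j)
    (hsum : ∑ i, t i = 0)
    (hge : ∀ i j, G.Adj i j → 1 ≤ ‖t i - t j‖)
    (hmin : ∃ i j, G.Adj i j ∧ ‖t i - t j‖ = 1)
    (hrigid : IsParallelRigid G t)
    (t' : V → EuclideanSpace ℝ (Fin d)) (d' : V → V → ℝ)
    (hfeas₁ : ∑ i, t' i = 0)
    (hfeas₂ : ∀ i j, G.Adj i j → 1 ≤ d' i j)
    (hcost : (∑ i, ∑ j, if G.Adj i j then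
        ‖t' i - t' j - d' i j • (‖t i - t j‖⁻¹ • (t i - t j))‖ ^ 2 else 0) = 0) :
    (∃ α : ℝ, 1 ≤ α ∧ ∀ i, t' i = α • t i) ∧ IsCongruent t t' := by
  -- Each edge term is zero
  have hterm : ∀ i j, G.Adj i j →
      t' i - t' j = (d' i j * ‖t i - t j‖⁻¹) • (t i - t j) := by
    intro i j hij
    have hnn : ∀ i j, (0:ℝ) ≤ (if G.Adj i j then
        ‖t' i - t' j - d' i j • (‖t i - t j‖⁻¹ • (t i - t j))‖ ^ 2 else 0) := by
      intro i j; split <;> positivity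
    have h1 : ∀ i ∈ Finset.univ, (0:ℝ) ≤ ∑ j, (if G.Adj i j then
        ‖t' i - t' j - d' i j • (‖t i - t j‖⁻¹ • (t i - t j))‖ ^ 2 else 0) := by
      intro i _; exact Finset.sum_nonneg fun j _ => hnn i j
    have h2 := (Finset.sum_eq_zero_iff_of_nonneg h1).mp hcost i (Finset.mem_univ i)
    have h3 := (Finset.sum_eq_zero_iff_of_nonneg (fun j _ => hnn i j)).mp h2 j
      (Finset.mem_univ j)
    rw [if_pos hij] at h3
    have h4 : ‖t' i - t' j - d' i j • (‖t i - t j‖⁻¹ • (t i - t j))‖ = 0 := by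
      nlinarith [norm_nonneg (t' i - t' j - d' i j • (‖t i - t j‖⁻¹ • (t i - t j)))]
    have h5 := sub_eq_zero.mp (norm_eq_zero.mp h4)
    rw [h5, smul_smul]
  -- parallel
  have hpar : IsParallel G t t' := fun i j hij =>
    ⟨d' i j * ‖t i - t j‖⁻¹, hterm i j hij⟩
  obtain ⟨c, b, hcb⟩ := hrigid t' hpar
  obtain ⟨i0, j0, hadj, hnorm⟩ := hmin
  haveI : Nonempty V := ⟨i0⟩
  -- b = 0
  have hb : b = 0 := by
    have : (0 : EuclideanSpace ℝ (Fin d)) = c • (0 : EuclideanSpace ℝ (Fin d))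
        + (Fintype.card V : ℝ) • b := by
      calc (0 : EuclideanSpace ℝ (Fin d)) = ∑ i, t' i := hfeas₁.symm
        _ = ∑ i, (c • t i + b) := by simp [hcb]
        _ = c • (∑ i, t i) + (Fintype.card V : ℝ) • b := by
            rw [Finset.sum_add_distrib, Finset.smul_sum, Finset.sum_const]
            simp [← Nat.cast_smul_eq_nsmul ℝ]
        _ = c • (0 : EuclideanSpace ℝ (Fin d)) + (Fintype.card V : ℝ) • b := by
            rw [hsum]
    have hcard : (0:ℝ) < (Fintype.card V : ℝ) := by
      exact_mod_cast Fintype.card_pos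
    have : (Fintype.card V : ℝ) • b = 0 := by
      rw [smul_zero, zero_add] at this; exact this.symm
    exact (smul_eq_zero.mp this).resolve_left (by positivity)
  -- c = d' i0 j0 ≥ 1
  have hdiff : t i0 - t j0 ≠ 0 := sub_ne_zero.mpr (ht i0 j0 hadj)
  have hc : c = d' i0 j0 := by
    have e1 : t' i0 - t' j0 = c • (t i0 - t j0) := by
      rw [hcb, hcb, hb]; simp; module
    have e2 := hterm i0 j0 hadj
    rw [hnorm] at e2
    simp only [inv_one, mul_one] at e2
    have : (c - d' i0 j0) • (t i0 - t j0) = 0 := by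
      rw [sub_smul, ← e1, ← e2, sub_self]
    have := (smul_eq_zero.mp this).resolve_right hdiff
    linarith [sub_eq_zero.mp (by exact_mod_cast this)]
  have hα : 1 ≤ c := hc ▸ hfeas₂ i0 j0 hadj
  have heq : ∀ i, t' i = c • t i := fun i => by rw [hcb, hb, add_zero]
  exact ⟨⟨c, hα, heq⟩, c, b, hcb⟩
end
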